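/- If φ ∈ L∞(μ) is not a.e. equal to a constant, then the multiplication operator M_φ on a Banach function space X has a non-trivial hyperinvariant band: there is a measurable set E with both E and its complement of positive measure such that every bounded operator commuting with M_φ leaves the band B_E = {f ∈ X : f = 0 a.e. outside E} invariant. -/

import Mathlib

/-!
If `φ` is not a.e. constant, some level `α` splits `Ω` into two parts `E = {φ ≤ α}` and
`Eᶜ = {α < φ}` of positive measure. Let `R` commute with `M_φ`, let `f` vanish off `E` and
let `|φ| ≤ C`. For `β > α`, a polynomial `p` that is close to `1` on `[-C, α]` and close to `0`
on `[β, C]` (Weierstrass) gives `p(M_φ) f ≈ f`, hence `p(M_φ) (R f) = R (p(M_φ) f) ≈ R f`,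
while `p(M_φ) (R f)` is small on `{β ≤ φ}`. So the restriction of `R f` to `{β ≤ φ}` has
arbitrarily small norm and vanishes; letting `β ↓ α` shows that `R f` vanishes off `E`.
-/

open MeasureTheory Set Filter Topology Polynomial

theorem exists_measure_le_pos_and_measure_lt_pos {Ω : Type*} [MeasurableSpace Ω]
    {μ : Measure Ω} {φ : Ω → ℝ} (h : ¬ ∃ c : ℝ, φ =ᵐ[μ] fun _ => c) :
    ∃ α, 0 < μ {ω | φ ω ≤ α} ∧ 0 < μ {ω | α < φ ω} := by
  contrapose! h
  -- countably many half-lines `Iic α` separate the points of `ℝ`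
  refine exists_eventuallyEq_const_of_forall_separating (· ∈ range (Iic : ℝ → Set ℝ)) ?_
  rintro _ ⟨α, rfl⟩
  by_cases h0 : μ {ω | φ ω ≤ α} = 0
  · right
    simpa [ae_iff] using h0
  · left
    simpa [ae_iff] using nonpos_iff_eq_zero.1 (h α (pos_iff_ne_zero.2 h0))

theorem ae_lt_imp_of_forall_ae_le_imp {Ω : Type*} [MeasurableSpace Ω] {μ : Measure Ω}
    {φ : Ω → ℝ} {P : Ω → Prop} {α : ℝ} (h : ∀ β, α < β → ∀ᵐ ω ∂μ, β ≤ φ ω → P ω) :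
    ∀ᵐ ω ∂μ, α < φ ω → P ω := by
  obtain ⟨β, -, hαβ, hβ⟩ := exists_seq_strictAnti_tendsto α
  filter_upwards [ae_all_iff.2 fun n => h (β n) (hαβ n)] with ω hω hlt
  obtain ⟨n, hn⟩ := (hβ.eventually (gt_mem_nhds hlt)).exists
  exact hω n hn.le

theorem exists_polynomial_near_step (C : ℝ) {α β ε : ℝ} (hαβ : α < β) (hε : 0 < ε) :
    ∃ p : ℝ[X], (∀ t, |t| ≤ C → t ≤ α → |p.eval t - 1| ≤ ε) ∧
      (∀ t, |t| ≤ C → β ≤ t → |p.eval t| ≤ ε) := by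
  set u : ℝ → ℝ := fun t => min 1 (max 0 ((β - t) / (β - α)))
  have hu : Continuous u := by fun_prop
  obtain ⟨p, hp⟩ := exists_polynomial_near_of_continuousOn (-C) C u hu.continuousOn ε hε
  have hβα : 0 < β - α := sub_pos.2 hαβ
  refine ⟨p, fun t ht htα => ?_, fun t ht hβt => ?_⟩
  · have hu1 : u t = 1 := by
      have : 1 ≤ (β - t) / (β - α) := (one_le_div hβα).2 (by linarith)
      simp only [u, max_eq_right (zero_le_one.trans this), min_eq_left this]
    simpa [hu1] using (hp t (abs_le.1 ht)).le
  · have hu0 : u t = 0 := by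
      have : (β - t) / (β - α) ≤ 0 := div_nonpos_of_nonpos_of_nonneg (by linarith) hβα.le
      simp only [u, max_eq_left this, min_eq_right zero_le_one]
    simpa [hu0] using (hp t (abs_le.1 ht)).le

section Embedding

variable {Ω : Type*} [MeasurableSpace Ω] {μ : Measure Ω} {X : Type*} [AddCommGroup X]
  [Module ℝ X] (ι : X →ₗ[ℝ] (Ω →ₘ[μ] ℝ))

theorem ae_coeFn_map_add (u v : X) : (ι (u + v) : Ω → ℝ) =ᵐ[μ] ι u + ι v := by
  rw [map_add]
  exact AEEqFun.coeFn_add _ _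

theorem ae_coeFn_map_sub (u v : X) : (ι (u - v) : Ω → ℝ) =ᵐ[μ] ι u - ι v := by
  rw [map_sub]
  exact AEEqFun.coeFn_sub _ _

theorem ae_coeFn_map_smul (c : ℝ) (u : X) : (ι (c • u) : Ω → ℝ) =ᵐ[μ] c • ι u := by
  rw [map_smul]
  exact AEEqFun.coeFn_smul _ _

theorem exists_ae_eq_indicator
    (hideal : ∀ (f : X) (g : Ω →ₘ[μ] ℝ),
      (∀ᵐ ω ∂μ, |(g : Ω → ℝ) ω| ≤ |(ι f : Ω → ℝ) ω|) → ∃ h : X, ι h = g)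
    {F : Set Ω} (hF : MeasurableSet F) (u : X) :
    ∃ w : X, (ι w : Ω → ℝ) =ᵐ[μ] F.indicator (ι u) := by
  have hmeas := (ι u).aestronglyMeasurable.indicator hF
  obtain ⟨w, hw⟩ := hideal u (AEEqFun.mk _ hmeas) <| by
    filter_upwards [AEEqFun.coeFn_mk _ hmeas] with ω hω
    rw [hω]
    exact norm_indicator_le_norm_self (ι u : Ω → ℝ) ω
  exact ⟨w, hw ▸ AEEqFun.coeFn_mk _ hmeas⟩

end Embedding

section Multiplier

variable {Ω : Type*} [MeasurableSpace Ω] {μ : Measure Ω} {X : Type*} [NormedAddCommGroup X]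
  [NormedSpace ℝ X] (ι : X →ₗ[ℝ] (Ω →ₘ[μ] ℝ))

theorem ae_aeval_apply_eq_eval_mul {φ : Ω → ℝ} {Mφ : X →L[ℝ] X}
    (hMφ : ∀ f : X, (ι (Mφ f) : Ω → ℝ) =ᵐ[μ] fun ω => φ ω * (ι f : Ω → ℝ) ω)
    (p : ℝ[X]) (u : X) :
    (ι (aeval Mφ p u) : Ω → ℝ) =ᵐ[μ] fun ω => p.eval (φ ω) * (ι u : Ω → ℝ) ω := by
  induction p using Polynomial.induction_on generalizing u with
  | C a =>
    rw [aeval_C, ContinuousLinearMap.algebraMap_apply]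
    filter_upwards [ae_coeFn_map_smul ι a u] with ω hω
    rw [hω, Pi.smul_apply, smul_eq_mul, eval_C]
  | add p q hp hq =>
    rw [map_add, add_apply]
    filter_upwards [ae_coeFn_map_add ι (aeval Mφ p u) (aeval Mφ q u), hp u, hq u]
      with ω hω hpω hqω
    rw [hω, Pi.add_apply, hpω, hqω, eval_add, add_mul]
  | monomial n a hp =>
    rw [pow_succ, ← mul_assoc, map_mul, aeval_X, mul_apply_eq_comp]
    filter_upwards [hp (Mφ u), hMφ u] with ω hpω hMω
    simp only [hpω, hMω, eval_mul, eval_pow, eval_C, eval_X]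
    ring

end Multiplier

section SolidNorm

variable {Ω : Type*} [MeasurableSpace Ω] {μ : Measure Ω} {X : Type*} [NormedAddCommGroup X]
  [Lattice X] [HasSolidNorm X] [NormedSpace ℝ X] (ι : X →ₗ[ℝ] (Ω →ₘ[μ] ℝ))

theorem norm_le_norm_of_ae_abs_le
    (hι_mono : ∀ f g : X, f ≤ g ↔ ∀ᵐ ω ∂μ, (ι f : Ω → ℝ) ω ≤ (ι g : Ω → ℝ) ω)
    (hι_abs : ∀ f : X, (ι |f| : Ω → ℝ) =ᵐ[μ] fun ω => |(ι f : Ω → ℝ) ω|) {h k : X}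
    (hhk : ∀ᵐ ω ∂μ, |(ι h : Ω → ℝ) ω| ≤ |(ι k : Ω → ℝ) ω|) : ‖h‖ ≤ ‖k‖ := by
  refine norm_le_norm_of_abs_le_abs ((hι_mono _ _).2 ?_)
  filter_upwards [hι_abs h, hι_abs k, hhk] with ω hh hk hω
  rwa [hh, hk]

theorem norm_le_add_of_ae_abs_le_add [IsOrderedAddMonoid X]
    (hι_mono : ∀ f g : X, f ≤ g ↔ ∀ᵐ ω ∂μ, (ι f : Ω → ℝ) ω ≤ (ι g : Ω → ℝ) ω)
    (hι_abs : ∀ f : X, (ι |f| : Ω → ℝ) =ᵐ[μ] fun ω => |(ι f : Ω → ℝ) ω|) {h a b : X}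
    (hh : ∀ᵐ ω ∂μ, |(ι h : Ω → ℝ) ω| ≤ |(ι a : Ω → ℝ) ω| + |(ι b : Ω → ℝ) ω|) :
    ‖h‖ ≤ ‖a‖ + ‖b‖ :=
  calc ‖h‖ ≤ ‖|a| + |b|‖ := by
        refine norm_le_norm_of_ae_abs_le ι hι_mono hι_abs ?_
        filter_upwards [hh, ae_coeFn_map_add ι |a| |b|, hι_abs a, hι_abs b] with ω hω hab ha hb
        rw [hab, Pi.add_apply, ha, hb]
        exact hω.trans (le_abs_self _)
    _ ≤ ‖|a|‖ + ‖|b|‖ := norm_add_le _ _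
    _ = ‖a‖ + ‖b‖ := by rw [norm_abs_eq_norm, norm_abs_eq_norm]

theorem norm_sub_le_of_ae_eq_mul
    (hι_mono : ∀ f g : X, f ≤ g ↔ ∀ᵐ ω ∂μ, (ι f : Ω → ℝ) ω ≤ (ι g : Ω → ℝ) ω)
    (hι_abs : ∀ f : X, (ι |f| : Ω → ℝ) =ᵐ[μ] fun ω => |(ι f : Ω → ℝ) ω|) {u v : X}
    {m : Ω → ℝ} {ε : ℝ} (hε : 0 ≤ ε)
    (hv : (ι v : Ω → ℝ) =ᵐ[μ] fun ω => m ω * (ι u : Ω → ℝ) ω)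
    (hm : ∀ᵐ ω ∂μ, (ι u : Ω → ℝ) ω ≠ 0 → |m ω - 1| ≤ ε) :
    ‖u - v‖ ≤ ε * ‖u‖ :=
  calc ‖u - v‖ ≤ ‖ε • u‖ := by
        refine norm_le_norm_of_ae_abs_le ι hι_mono hι_abs ?_
        filter_upwards [ae_coeFn_map_sub ι u v, ae_coeFn_map_smul ι ε u, hv, hm]
          with ω hsub hsmul hvω hmω
        rw [hsub, hsmul, Pi.sub_apply, Pi.smul_apply, hvω, smul_eq_mul, abs_sub_comm,
          ← sub_one_mul, abs_mul, abs_mul, abs_of_nonneg hε]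
        by_cases hu : (ι u : Ω → ℝ) ω = 0
        · simp [hu]
        · exact mul_le_mul_of_nonneg_right (hmω hu) (abs_nonneg _)
    _ = ε * ‖u‖ := by rw [norm_smul, Real.norm_of_nonneg hε]

theorem norm_le_of_ae_eq_indicator [IsOrderedAddMonoid X]
    (hι_mono : ∀ f g : X, f ≤ g ↔ ∀ᵐ ω ∂μ, (ι f : Ω → ℝ) ω ≤ (ι g : Ω → ℝ) ω)
    (hι_abs : ∀ f : X, (ι |f| : Ω → ℝ) =ᵐ[μ] fun ω => |(ι f : Ω → ℝ) ω|) {u v w : X}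
    {m : Ω → ℝ} {F : Set Ω} {ε : ℝ} (hε : 0 ≤ ε)
    (hv : (ι v : Ω → ℝ) =ᵐ[μ] fun ω => m ω * (ι u : Ω → ℝ) ω)
    (hw : (ι w : Ω → ℝ) =ᵐ[μ] F.indicator (ι u)) (hm : ∀ ω ∈ F, |m ω| ≤ ε) :
    ‖w‖ ≤ ‖u - v‖ + ε * ‖u‖ :=
  calc ‖w‖ ≤ ‖u - v‖ + ‖ε • u‖ := by
        refine norm_le_add_of_ae_abs_le_add ι hι_mono hι_abs ?_
        filter_upwards [hw, ae_coeFn_map_sub ι u v, ae_coeFn_map_smul ι ε u, hv]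
          with ω hwω hsub hsmul hvω
        rw [hwω, hsub, hsmul, Pi.sub_apply, Pi.smul_apply, hvω, smul_eq_mul]
        by_cases hωF : ω ∈ F
        · rw [indicator_of_mem hωF, abs_mul ε, abs_of_nonneg hε]
          calc |(ι u : Ω → ℝ) ω|
              ≤ |(ι u : Ω → ℝ) ω - m ω * (ι u : Ω → ℝ) ω| + |m ω * (ι u : Ω → ℝ) ω| := by
                linarith [abs_sub_abs_le_abs_sub ((ι u : Ω → ℝ) ω) (m ω * (ι u : Ω → ℝ) ω)]
            _ ≤ _ := by
                rw [abs_mul]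
                gcongr
                exact hm ω hωF
        · rw [indicator_of_notMem hωF, abs_zero]
          positivity
    _ = ‖u - v‖ + ε * ‖u‖ := by rw [norm_smul, Real.norm_of_nonneg hε]

theorem ae_commute_apply_eq_zero_of_lt [IsOrderedAddMonoid X]
    (hι_mono : ∀ f g : X, f ≤ g ↔ ∀ᵐ ω ∂μ, (ι f : Ω → ℝ) ω ≤ (ι g : Ω → ℝ) ω)
    (hι_abs : ∀ f : X, (ι |f| : Ω → ℝ) =ᵐ[μ] fun ω => |(ι f : Ω → ℝ) ω|)
    (hideal : ∀ (f : X) (g : Ω →ₘ[μ] ℝ),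
      (∀ᵐ ω ∂μ, |(g : Ω → ℝ) ω| ≤ |(ι f : Ω → ℝ) ω|) → ∃ h : X, ι h = g)
    {φ : Ω → ℝ} (hφ_meas : Measurable φ) {C : ℝ} (hC : ∀ ω, |φ ω| ≤ C) {Mφ : X →L[ℝ] X}
    (hMφ : ∀ f : X, (ι (Mφ f) : Ω → ℝ) =ᵐ[μ] fun ω => φ ω * (ι f : Ω → ℝ) ω)
    {R : X →L[ℝ] X} (hR : Commute R Mφ) {α β : ℝ} (hαβ : α < β) {f : X}
    (hf : ∀ᵐ ω ∂μ, ¬ φ ω ≤ α → (ι f : Ω → ℝ) ω = 0) :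
    ∀ᵐ ω ∂μ, β ≤ φ ω → (ι (R f) : Ω → ℝ) ω = 0 := by
  obtain ⟨w, hw⟩ :=
    exists_ae_eq_indicator ι hideal (measurableSet_le measurable_const hφ_meas) (R f)
  have hw_small : ∀ ε > 0, ‖w‖ ≤ ε * (‖R‖ * ‖f‖ + ‖R f‖) := by
    intro ε hε
    obtain ⟨p, hp_one, hp_zero⟩ := exists_polynomial_near_step C hαβ hε
    have hRp : R (aeval Mφ p f) = aeval Mφ p (R f) :=
      congrArg (· f) (Algebra.commute_of_mem_adjoin_singleton_of_commute
        (aeval_mem_adjoin_singleton ℝ Mφ) hR).eq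
    have hpf : ‖f - aeval Mφ p f‖ ≤ ε * ‖f‖ := by
      refine norm_sub_le_of_ae_eq_mul ι hι_mono hι_abs hε.le
        (ae_aeval_apply_eq_eval_mul ι hMφ p f) ?_
      filter_upwards [hf] with ω hω hne
      exact hp_one _ (hC ω) (not_not.1 (mt hω hne))
    calc ‖w‖ ≤ ‖R f - aeval Mφ p (R f)‖ + ε * ‖R f‖ :=
          norm_le_of_ae_eq_indicator ι hι_mono hι_abs hε.le
            (ae_aeval_apply_eq_eval_mul ι hMφ p (R f)) hw fun ω hω => hp_zero _ (hC ω) hω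
      _ = ‖R (f - aeval Mφ p f)‖ + ε * ‖R f‖ := by rw [map_sub, hRp]
      _ ≤ ‖R‖ * (ε * ‖f‖) + ε * ‖R f‖ := by gcongr; exact R.le_opNorm_of_le hpf
      _ = ε * (‖R‖ * ‖f‖ + ‖R f‖) := by ring
  have hw_zero : w = 0 := by
    have hlim : Tendsto (fun ε : ℝ => ε * (‖R‖ * ‖f‖ + ‖R f‖)) (𝓝[>] 0) (𝓝 0) :=
      tendsto_nhdsWithin_of_tendsto_nhds
        ((continuous_id.mul continuous_const).tendsto' 0 0 (zero_mul _))
    exact norm_le_zero_iff.1 (ge_of_tendsto hlim (eventually_nhdsWithin_of_forall hw_small))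
  have hw_ae_zero : (ι w : Ω → ℝ) =ᵐ[μ] 0 := by
    rw [hw_zero, map_zero]
    exact AEEqFun.coeFn_zero
  filter_upwards [hw, hw_ae_zero] with ω hwω hzero hωF
  rwa [← indicator_of_mem (s := {ω | β ≤ φ ω}) hωF (ι (R f) : Ω → ℝ), ← hwω]

end SolidNorm

theorem multiplication_operator_has_hyperinvariant_band_general
    {Ω : Type*} [MeasurableSpace Ω] {μ : Measure Ω}
    {X : Type*} [NormedAddCommGroup X] [Lattice X] [HasSolidNorm X] [IsOrderedAddMonoid X] [NormedSpace ℝ X]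
    (ι : X →ₗ[ℝ] (Ω →ₘ[μ] ℝ))
    (hι_mono : ∀ f g : X, f ≤ g ↔ ∀ᵐ ω ∂μ, (ι f : Ω → ℝ) ω ≤ (ι g : Ω → ℝ) ω)
    (hι_abs : ∀ f : X, (ι |f| : Ω → ℝ) =ᵐ[μ] fun ω => |(ι f : Ω → ℝ) ω|)
    (hideal : ∀ (f : X) (g : Ω →ₘ[μ] ℝ),
      (∀ᵐ ω ∂μ, |(g : Ω → ℝ) ω| ≤ |(ι f : Ω → ℝ) ω|) → ∃ h : X, ι h = g)
    (φ : Ω → ℝ) (hφ_meas : Measurable φ) (hφ_bdd : ∃ C : ℝ, ∀ ω, |φ ω| ≤ C)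
    (Mφ : X →L[ℝ] X)
    (hMφ : ∀ f : X, (ι (Mφ f) : Ω → ℝ) =ᵐ[μ] fun ω => φ ω * (ι f : Ω → ℝ) ω)
    (hφ_nonconst : ¬ ∃ c : ℝ, φ =ᵐ[μ] fun _ => c) :
    ∃ E : Set Ω, MeasurableSet E ∧ 0 < μ E ∧ 0 < μ Eᶜ ∧
      ∀ R : X →L[ℝ] X, R.comp Mφ = Mφ.comp R →
        ∀ f : X, (∀ᵐ ω ∂μ, ω ∉ E → (ι f : Ω → ℝ) ω = 0) →
          (∀ᵐ ω ∂μ, ω ∉ E → (ι (R f) : Ω → ℝ) ω = 0) := by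
  obtain ⟨C, hC⟩ := hφ_bdd
  obtain ⟨α, hE, hEc⟩ := exists_measure_le_pos_and_measure_lt_pos hφ_nonconst
  refine ⟨{ω | φ ω ≤ α}, measurableSet_le hφ_meas measurable_const, hE, ?_, ?_⟩
  · simpa only [compl_ofPred, not_le] using hEc
  intro R hR f hf
  refine (ae_lt_imp_of_forall_ae_le_imp fun β hαβ => ?_).mono fun ω hω hωE => hω (not_le.1 hωE)
  exact ae_commute_apply_eq_zero_of_lt ι hι_mono hι_abs hideal hφ_meas hC hMφ hR hαβ hf

/-- if the essentially bounded multiplier `φ` is not a.e. constant, then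
`M_φ` has a non-trivial hyperinvariant band `B_E`: there is a measurable `E` with both
`E` and its complement of positive measure such that every bounded operator commuting
with `M_φ` maps functions supported a.e. in `E` to functions supported a.e. in `E`. -/
theorem multiplication_operator_has_hyperinvariant_band
    {Ω : Type*} [MeasurableSpace Ω] {μ : Measure Ω}
    {X : Type*} [NormedAddCommGroup X] [Lattice X] [HasSolidNorm X] [IsOrderedAddMonoid X] [NormedSpace ℝ X] [CompleteSpace X]
    (ι : X →ₗ[ℝ] (Ω →ₘ[μ] ℝ)) (hι_inj : Function.Injective ι)
    (hι_mono : ∀ f g : X, f ≤ g ↔ ∀ᵐ ω ∂μ, (ι f : Ω → ℝ) ω ≤ (ι g : Ω → ℝ) ω)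
    (hι_abs : ∀ f : X, (ι |f| : Ω → ℝ) =ᵐ[μ] fun ω => |(ι f : Ω → ℝ) ω|)
    (hideal : ∀ (f : X) (g : Ω →ₘ[μ] ℝ),
      (∀ᵐ ω ∂μ, |(g : Ω → ℝ) ω| ≤ |(ι f : Ω → ℝ) ω|) → ∃ h : X, ι h = g)
    (φ : Ω → ℝ) (hφ_meas : Measurable φ) (hφ_bdd : ∃ C : ℝ, ∀ ω, |φ ω| ≤ C)
    (Mφ : X →L[ℝ] X)
    (hMφ : ∀ f : X, (ι (Mφ f) : Ω → ℝ) =ᵐ[μ] fun ω => φ ω * (ι f : Ω → ℝ) ω)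
    (hφ_nonconst : ¬ ∃ c : ℝ, φ =ᵐ[μ] fun _ => c) :
    ∃ E : Set Ω, MeasurableSet E ∧ 0 < μ E ∧ 0 < μ Eᶜ ∧
      ∀ R : X →L[ℝ] X, R.comp Mφ = Mφ.comp R →
        ∀ f : X, (∀ᵐ ω ∂μ, ω ∉ E → (ι f : Ω → ℝ) ω = 0) →
          (∀ᵐ ω ∂μ, ω ∉ E → (ι (R f) : Ω → ℝ) ω = 0) :=
  multiplication_operator_has_hyperinvariant_band_general ι hι_mono hι_abs hideal φ hφ_meas hφ_bdd
    Mφ hMφ hφ_nonconst
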